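/- Let P, Q be probability distributions on ℝ with everywhere positive continuous densities f_X, f_Y and CDFs F_X, F_Y, both symmetric around a common center x*: f_X(x* + t) = f_X(x* − t) and f_Y(x* + t) = f_Y(x* − t) for all t ∈ ℝ. Then TVD(P_Q^{SD}, R) = TVD(Q_P^{SD}, R) = TVD(P, Q), where Q_P^{SD} is the law of 2 F_Y(X)(1 − F_Y(X)) for X ∼ P, P_Q^{SD} is the law of 2 F_X(Y)(1 − F_X(Y)) for Y ∼ Q, and R is the distribution on [0, 1/2] with density r(z) = 1/√(1 − 2z). -/

import Mathlib

/-!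
Write `g = SD(·; Q) = 2 F_Y (1 - F_Y)`. Since `Q` is symmetric about `x*`, so is `g`, and on
`(x*, ∞)` it is strictly decreasing with derivative `2 f_Y (1 - 2 F_Y) ≠ 0` and image `(0, 1/2)`.
For any law with a density symmetric about `x*`, the law of `g` is therefore twice the image of its
restriction to `(x*, ∞)`, whose density the one-dimensional change of variables computes. For `Q`
itself that density is `r`, because `1 - 2 g = (2 F_Y - 1)²`; changing variables back,
`TVD(g_* P, g_* Q) = ∫_{x*}^∞ |f_X - f_Y| = TVD(P, Q)` since `|f_X - f_Y|` is symmetric as well.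
The other identity follows by exchanging `P` and `Q`.
-/

open MeasureTheory Set Filter Topology ProbabilityTheory
open scoped ENNReal

/-- The total variation distance between two measures on `ℝ`, computed via their
densities (Radon–Nikodym derivatives) with respect to Lebesgue measure:
`TVD(P,Q) = (1/2) ∫ |p(x) - q(x)| dx`. -/
noncomputable def TVD (μ ν : Measure ℝ) : ℝ :=
  (1 / 2) * ∫ x, |(μ.rnDeriv volume x).toReal - (ν.rnDeriv volume x).toReal|

def IsSymmAbout {α : Type*} (f : ℝ → α) (c : ℝ) : Prop :=
  ∀ t, f (c + t) = f (c - t)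

namespace IsSymmAbout

variable {α : Type*} {f : ℝ → α} {c : ℝ}

lemma apply_two_mul_sub (hf : IsSymmAbout f c) (x : ℝ) : f (2 * c - x) = f x := by
  simpa [two_mul, add_sub_assoc] using hf (c - x)

lemma measurePreserving_withDensity_ofReal {f : ℝ → ℝ} (hf : IsSymmAbout f c) :
    MeasurePreserving (fun x => 2 * c - x) (volume.withDensity fun x => ENNReal.ofReal (f x))
      (volume.withDensity fun x => ENNReal.ofReal (f x)) := by
  have hσ := Measure.measurePreserving_sub_left volume (2 * c)
  refine ⟨hσ.measurable, Measure.ext fun A hA => ?_⟩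
  rw [Measure.map_apply hσ.measurable hA, withDensity_apply _ (hσ.measurable hA),
    withDensity_apply _ hA]
  simpa only [hf.apply_two_mul_sub] using
    hσ.setLIntegral_comp_preimage_emb (Homeomorph.subLeft (2 * c)).measurableEmbedding
      (fun x => ENNReal.ofReal (f x)) A

lemma integral_eq_two_mul_setIntegral_Ioi {f : ℝ → ℝ} (hf : IsSymmAbout f c)
    (hfi : Integrable f) : ∫ x, f x = 2 * ∫ x in Ioi c, f x := by
  have hσ := Measure.measurePreserving_sub_left volume (2 * c)
  have hIic : ∫ x in Iic c, f x = ∫ x in Ioi c, f x := by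
    have hpre : (fun x => 2 * c - x) ⁻¹' Ici c = Iic c := by ext x; simp [two_mul]
    rw [← integral_Ici_eq_integral_Ioi]
    simpa only [hf.apply_two_mul_sub, hpre] using
      hσ.setIntegral_preimage_emb (Homeomorph.subLeft (2 * c)).measurableEmbedding f (Ici c)
  rw [← integral_add_compl measurableSet_Iic hfi, compl_Iic, hIic, two_mul]

end IsSymmAbout

section Reflection

variable {μ : Measure ℝ} {c : ℝ}

lemma measure_eq_two_mul_measure_inter_Ioi [NullSingletonClass μ]
    (hμ : MeasurePreserving (fun x => 2 * c - x) μ μ) {T : Set ℝ} (hT : MeasurableSet T)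
    (hTσ : (fun x => 2 * c - x) ⁻¹' T = T) : μ T = 2 * μ (T ∩ Ioi c) := by
  have hIic : μ (T ∩ Iic c) = μ (T ∩ Ioi c) := by
    have hpre : (fun x => 2 * c - x) ⁻¹' (T ∩ Ici c) = T ∩ Iic c := by
      rw [preimage_inter, hTσ]; ext x; simp [two_mul]
    rw [← hpre, hμ.measure_preimage (hT.inter measurableSet_Ici).nullMeasurableSet]
    exact measure_congr (ae_eq_refl T |>.inter Ioi_ae_eq_Ici.symm)
  rw [← measure_inter_add_sdiff T measurableSet_Iic, sdiff_eq, compl_Iic, hIic, two_mul]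

lemma map_eq_map_two_smul_restrict_Ioi [NullSingletonClass μ]
    (hμ : MeasurePreserving (fun x => 2 * c - x) μ μ) {g : ℝ → ℝ} (hg : Measurable g)
    (hgsymm : IsSymmAbout g c) :
    μ.map g = ((2 : ℝ≥0∞) • μ.restrict (Ioi c)).map g := by
  ext A hA
  have hTσ : (fun x => 2 * c - x) ⁻¹' (g ⁻¹' A) = g ⁻¹' A := by
    ext x; simp [hgsymm.apply_two_mul_sub]
  rw [Measure.map_apply hg hA, Measure.map_apply hg hA, Measure.smul_apply,
    Measure.restrict_apply (hg hA), measure_eq_two_mul_measure_inter_Ioi hμ (hg hA) hTσ,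
    smul_eq_mul]

end Reflection

section ImageDensity

variable {s : Set ℝ} {g g' h : ℝ → ℝ}

/-- The density of the image of `h(x) dx` on `s` under a map `g` injective on `s` with derivative
`g'`: it is `h (g⁻¹ z) / |g' (g⁻¹ z)|` on `g '' s` and `0` elsewhere. -/
noncomputable def imageDensity (s : Set ℝ) (g g' h : ℝ → ℝ) : ℝ → ℝ :=
  Function.extend (s.domRestrict g) (fun x => h x / |g' x|) 0

lemma imageDensity_apply (hinj : InjOn g s) {x : ℝ} (hx : x ∈ s) :
    imageDensity s g g' h (g x) = h x / |g' x| :=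
  (injOn_iff_injective.1 hinj).extend_apply _ _ ⟨x, hx⟩

lemma imageDensity_of_notMem {z : ℝ} (hz : z ∉ g '' s) : imageDensity s g g' h z = 0 :=
  Function.extend_apply' _ _ _ fun ⟨x, hx⟩ => hz ⟨x, x.2, hx⟩

lemma imageDensity_nonneg (hinj : InjOn g s) (hh : ∀ x, 0 ≤ h x) (z : ℝ) :
    0 ≤ imageDensity s g g' h z := by
  by_cases hz : z ∈ g '' s
  · obtain ⟨x, hx, rfl⟩ := hz
    rw [imageDensity_apply hinj hx]
    exact div_nonneg (hh x) (abs_nonneg _)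
  · rw [imageDensity_of_notMem hz]

lemma measurable_imageDensity (hs : MeasurableSet s)
    (hg : ∀ x ∈ s, HasDerivWithinAt g (g' x) s x) (hinj : InjOn g s) (hh : Measurable h)
    (hg'm : Measurable g') : Measurable (imageDensity s g g' h) :=
  (measurableEmbedding_of_fderivWithin hs (fun x hx => (hg x hx).hasFDerivWithinAt)
    hinj).measurable_extend ((hh.div hg'm.abs).comp measurable_subtype_coe) measurable_const

lemma map_withDensity_restrict_eq_withDensity_imageDensity (hs : MeasurableSet s)
    (hgm : Measurable g) (hg : ∀ x ∈ s, HasDerivWithinAt g (g' x) s x)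
    (hg'0 : ∀ x ∈ s, g' x ≠ 0) (hinj : InjOn g s) :
    ((volume.restrict s).withDensity fun x => ENNReal.ofReal (h x)).map g =
      volume.withDensity fun z => ENNReal.ofReal (imageDensity s g g' h z) := by
  ext A hA
  have hpre : MeasurableSet (g ⁻¹' A ∩ s) := (hgm hA).inter hs
  have himage : MeasurableSet (g '' s) :=
    measurable_image_of_fderivWithin hs (fun x hx => (hg x hx).hasFDerivWithinAt) hinj
  rw [Measure.map_apply hgm hA, withDensity_apply _ (hgm hA), withDensity_apply _ hA,
    Measure.restrict_restrict (hgm hA)]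
  calc ∫⁻ x in g ⁻¹' A ∩ s, ENNReal.ofReal (h x)
      = ∫⁻ x in g ⁻¹' A ∩ s, ENNReal.ofReal |g' x| *
          ENNReal.ofReal (imageDensity s g g' h (g x)) := by
        refine setLIntegral_congr_fun hpre fun x hx => ?_
        rw [imageDensity_apply hinj hx.2, ← ENNReal.ofReal_mul (abs_nonneg _),
          mul_div_cancel₀ _ (abs_ne_zero.2 (hg'0 x hx.2))]
    _ = ∫⁻ z in A ∩ g '' s, ENNReal.ofReal (imageDensity s g g' h z) := by
        rw [← image_preimage_inter, lintegral_image_eq_lintegral_abs_deriv_mul hpre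
          (fun x hx => (hg x hx.2).mono inter_subset_right) (hinj.mono inter_subset_right)]
    _ = ∫⁻ z in A, ENNReal.ofReal (imageDensity s g g' h z) := by
        rw [← lintegral_inter_add_sdiff _ A himage, setLIntegral_congr_fun (hA.diff himage)
          (g := fun _ => 0) fun z hz => by rw [imageDensity_of_notMem hz.2, ENNReal.ofReal_zero],
          lintegral_zero, add_zero]

end ImageDensity

lemma TVD_comm (μ ν : Measure ℝ) : TVD μ ν = TVD ν μ := by
  simp only [TVD, abs_sub_comm]

lemma TVD_withDensity_ofReal {a b : ℝ → ℝ} (ha : AEMeasurable a) (hb : AEMeasurable b)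
    (ha0 : ∀ x, 0 ≤ a x) (hb0 : ∀ x, 0 ≤ b x) :
    TVD (volume.withDensity fun x => ENNReal.ofReal (a x))
      (volume.withDensity fun x => ENNReal.ofReal (b x)) = 1 / 2 * ∫ x, |a x - b x| := by
  rw [TVD]
  congr 1
  refine integral_congr_ae ?_
  filter_upwards [Measure.rnDeriv_withDensity₀ volume ha.ennreal_ofReal,
    Measure.rnDeriv_withDensity₀ volume hb.ennreal_ofReal] with x hax hbx
  rw [hax, hbx, ENNReal.toReal_ofReal (ha0 x), ENNReal.toReal_ofReal (hb0 x)]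

structure IsSymmFold (g g' : ℝ → ℝ) (c : ℝ) : Prop where
  measurable : Measurable g
  symm : IsSymmAbout g c
  hasDerivWithinAt : ∀ x ∈ Ioi c, HasDerivWithinAt g (g' x) (Ioi c) x
  measurable_deriv : Measurable g'
  deriv_ne_zero : ∀ x ∈ Ioi c, g' x ≠ 0
  injOn : InjOn g (Ioi c)

namespace IsSymmFold

variable {c : ℝ} {p q g g' : ℝ → ℝ} {P Q : Measure ℝ}

lemma map_eq_withDensity_imageDensity (hg : IsSymmFold g g' c)
    (hP : P = volume.withDensity fun x => ENNReal.ofReal (p x)) (hp : IsSymmAbout p c) :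
    P.map g =
      volume.withDensity fun z => ENNReal.ofReal (imageDensity (Ioi c) g g' (2 * p) z) := by
  subst hP
  rw [← map_withDensity_restrict_eq_withDensity_imageDensity measurableSet_Ioi hg.measurable
      hg.hasDerivWithinAt hg.deriv_ne_zero hg.injOn,
    map_eq_map_two_smul_restrict_Ioi hp.measurePreserving_withDensity_ofReal hg.measurable
      hg.symm,
    restrict_withDensity measurableSet_Ioi, ← withDensity_smul' _ _ ENNReal.ofNat_ne_top]
  congr 2
  ext x
  simp [ENNReal.ofReal_mul]

theorem TVD_map_eq (hg : IsSymmFold g g' c)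
    (hP : P = volume.withDensity fun x => ENNReal.ofReal (p x))
    (hQ : Q = volume.withDensity fun x => ENNReal.ofReal (q x))
    (hpm : Measurable p) (hqm : Measurable q) (hp0 : ∀ x, 0 ≤ p x) (hq0 : ∀ x, 0 ≤ q x)
    (hpi : Integrable p) (hqi : Integrable q) (hp : IsSymmAbout p c) (hq : IsSymmAbout q c) :
    TVD (P.map g) (Q.map g) = TVD P Q := by
  have hρ {h : ℝ → ℝ} (hm : Measurable h) : Measurable (imageDensity (Ioi c) g g' (2 * h)) :=
    measurable_imageDensity measurableSet_Ioi hg.hasDerivWithinAt hg.injOn (hm.const_mul 2)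
      hg.measurable_deriv
  have hρ0 {h : ℝ → ℝ} (h0 : ∀ x, 0 ≤ h x) (z : ℝ) : 0 ≤ imageDensity (Ioi c) g g' (2 * h) z :=
    imageDensity_nonneg hg.injOn (fun x => mul_nonneg zero_le_two (h0 x)) z
  rw [hg.map_eq_withDensity_imageDensity hP hp, hg.map_eq_withDensity_imageDensity hQ hq, hP, hQ,
    TVD_withDensity_ofReal (hρ hpm).aemeasurable (hρ hqm).aemeasurable (hρ0 hp0) (hρ0 hq0),
    TVD_withDensity_ofReal hpm.aemeasurable hqm.aemeasurable hp0 hq0]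
  congr 1
  have hsymm : IsSymmAbout (fun x => |p x - q x|) c := fun t => by simp only [hp t, hq t]
  calc ∫ z, |imageDensity (Ioi c) g g' (2 * p) z - imageDensity (Ioi c) g g' (2 * q) z|
      = ∫ z in g '' Ioi c,
          |imageDensity (Ioi c) g g' (2 * p) z - imageDensity (Ioi c) g g' (2 * q) z| :=
        (setIntegral_eq_integral_of_forall_compl_eq_zero fun z hz => by
          simp [imageDensity_of_notMem hz]).symm
    _ = ∫ x in Ioi c, |g' x| • |imageDensity (Ioi c) g g' (2 * p) (g x) -
          imageDensity (Ioi c) g g' (2 * q) (g x)| :=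
        integral_image_eq_integral_abs_deriv_smul measurableSet_Ioi hg.hasDerivWithinAt
          hg.injOn _
    _ = ∫ x in Ioi c, 2 * |p x - q x| := by
        refine setIntegral_congr_fun measurableSet_Ioi fun x hx => ?_
        have hg'x : |g' x| ≠ 0 := abs_ne_zero.2 (hg.deriv_ne_zero x hx)
        rw [imageDensity_apply hg.injOn hx, imageDensity_apply hg.injOn hx, Pi.mul_apply,
          Pi.mul_apply, Pi.ofNat_apply, smul_eq_mul, ← sub_div, abs_div, abs_abs,
          mul_div_cancel₀ _ hg'x, ← mul_sub, abs_mul, abs_two]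
    _ = ∫ x, |p x - q x| := by
        rw [integral_const_mul, hsymm.integral_eq_two_mul_setIntegral_Ioi (hpi.sub hqi).abs]

end IsSymmFold

lemma integrable_of_eq_withDensity_ofReal {α : Type*} [MeasurableSpace α] {μ ν : Measure α}
    [IsFiniteMeasure μ] {f : α → ℝ} (hμ : μ = ν.withDensity fun x => ENNReal.ofReal (f x))
    (hf : AEStronglyMeasurable f ν) (hf0 : ∀ x, 0 ≤ f x) : Integrable f ν := by
  refine ⟨hf, ?_⟩
  rw [hasFiniteIntegral_iff_ofReal (ae_of_all _ hf0), ← setLIntegral_univ,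
    ← withDensity_apply _ .univ, ← hμ]
  exact measure_lt_top μ univ

lemma hasDerivAt_setIntegral_Iic {f : ℝ → ℝ} (hf : Integrable f) {x : ℝ}
    (hfx : ContinuousAt f x) : HasDerivAt (fun y => ∫ t in Iic y, f t) (f x) x := by
  have hsplit :
      (fun y => ∫ t in Iic y, f t) = fun y => (∫ t in Iic x, f t) + ∫ t in x..y, f t := by
    ext y
    rw [← intervalIntegral.integral_Iic_sub_Iic hf.integrableOn hf.integrableOn, add_sub_cancel]
  rw [hsplit]
  exact (intervalIntegral.integral_hasDerivAt_right hf.intervalIntegrable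
    hf.aestronglyMeasurable.stronglyMeasurableAtFilter hfx).const_add _

section CDF

variable {μ : Measure ℝ} {q : ℝ → ℝ} {c : ℝ}

lemma cdf_mem_Ioo (hmono : StrictMono (cdf μ)) (x : ℝ) : cdf μ x ∈ Ioo 0 1 :=
  ⟨(cdf_nonneg μ (x - 1)).trans_lt (hmono (sub_one_lt x)),
    (hmono (lt_add_one x)).trans_le (cdf_le_one μ _)⟩

variable [IsProbabilityMeasure μ]

lemma hasDerivAt_cdf (hμ : μ = volume.withDensity fun x => ENNReal.ofReal (q x))
    (hq : Continuous q) (hq0 : ∀ x, 0 ≤ q x) (x : ℝ) : HasDerivAt (cdf μ) (q x) x := by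
  have hqi := integrable_of_eq_withDensity_ofReal hμ hq.aestronglyMeasurable hq0
  have hcdf : ⇑(cdf μ) = fun y => ∫ t in Iic y, q t := by
    ext y
    rw [cdf_eq_real, measureReal_def, hμ, withDensity_apply _ measurableSet_Iic,
      ← ofReal_integral_eq_lintegral_ofReal hqi.integrableOn (ae_of_all _ hq0),
      ENNReal.toReal_ofReal (setIntegral_nonneg measurableSet_Iic fun t _ => hq0 t)]
  rw [hcdf]
  exact hasDerivAt_setIntegral_Iic hqi hq.continuousAt

lemma continuous_cdf (hμ : μ = volume.withDensity fun x => ENNReal.ofReal (q x))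
    (hq : Continuous q) (hq0 : ∀ x, 0 ≤ q x) : Continuous (cdf μ) :=
  continuous_iff_continuousAt.2 fun x => (hasDerivAt_cdf hμ hq hq0 x).continuousAt

lemma strictMono_cdf (hμ : μ = volume.withDensity fun x => ENNReal.ofReal (q x))
    (hq : AEMeasurable q) (hqpos : ∀ x, 0 < q x) : StrictMono (cdf μ) := by
  intro a b hab
  have hpos : μ (Ioc a b) ≠ 0 := by
    rw [hμ, Ne, withDensity_apply_eq_zero' hq.ennreal_ofReal]
    simpa [hqpos] using hab
  rw [← measure_cdf μ, StieltjesFunction.measure_Ioc, Ne, ENNReal.ofReal_eq_zero, not_le,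
    sub_pos] at hpos
  exact hpos

lemma cdf_two_mul_sub [NullSingletonClass μ] (hμ : MeasurePreserving (fun x => 2 * c - x) μ μ)
    (x : ℝ) : cdf μ (2 * c - x) = 1 - cdf μ x := by
  have hpre : (fun y => 2 * c - y) ⁻¹' Ici x = Iic (2 * c - x) := by
    ext y; simp only [mem_preimage, mem_Ici, mem_Iic]; constructor <;> intro <;> linarith
  rw [cdf_eq_real, cdf_eq_real, ← probReal_compl_eq_one_sub measurableSet_Iic, compl_Iic,
    measureReal_congr Ioi_ae_eq_Ici, ← hpre,
    hμ.measureReal_preimage measurableSet_Ici.nullMeasurableSet]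

lemma cdf_center [NullSingletonClass μ] (hμ : MeasurePreserving (fun x => 2 * c - x) μ μ) :
    cdf μ c = 1 / 2 := by
  have := cdf_two_mul_sub hμ c
  rw [show 2 * c - c = c by ring] at this
  linarith

end CDF

noncomputable def simplicialDepth (μ : Measure ℝ) (x : ℝ) : ℝ :=
  2 * cdf μ x * (1 - cdf μ x)

section SimplicialDepth

variable {μ : Measure ℝ} {c : ℝ}

lemma isSymmAbout_simplicialDepth [IsProbabilityMeasure μ] [NullSingletonClass μ]
    (hμ : MeasurePreserving (fun x => 2 * c - x) μ μ) : IsSymmAbout (simplicialDepth μ) c := by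
  intro t
  have h := cdf_two_mul_sub hμ (c + t)
  rw [show 2 * c - (c + t) = c - t by ring] at h
  simp only [simplicialDepth, h]
  ring

lemma hasDerivAt_simplicialDepth {d x : ℝ} (h : HasDerivAt (cdf μ) d x) :
    HasDerivAt (simplicialDepth μ) (2 * d * (1 - 2 * cdf μ x)) x :=
  ((h.const_mul 2).mul (h.const_sub 1)).congr_deriv (by ring)

lemma continuous_simplicialDepth (hcont : Continuous (cdf μ)) : Continuous (simplicialDepth μ) :=
  (continuous_const.mul hcont).mul (continuous_const.sub hcont)

lemma strictAntiOn_simplicialDepth (hmono : StrictMono (cdf μ)) (hc : cdf μ c = 1 / 2) :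
    StrictAntiOn (simplicialDepth μ) (Ici c) := by
  intro x hx y _ hxy
  have hFx : 1 / 2 ≤ cdf μ x := hc ▸ hmono.monotone hx
  have hFxy := hmono hxy
  simp only [simplicialDepth]
  nlinarith

lemma simplicialDepth_image_Ioi (hmono : StrictMono (cdf μ)) (hcont : Continuous (cdf μ))
    (hc : cdf μ c = 1 / 2) : simplicialDepth μ '' Ioi c = Ioo 0 (1 / 2) := by
  have hSc : simplicialDepth μ c = 1 / 2 := by simp only [simplicialDepth, hc]; norm_num
  refine Subset.antisymm ?_ fun z hz => ?_
  · rintro _ ⟨x, hx, rfl⟩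
    obtain ⟨h0, h1⟩ := cdf_mem_Ioo hmono x
    refine ⟨by simp only [simplicialDepth]; nlinarith, ?_⟩
    exact hSc ▸ strictAntiOn_simplicialDepth hmono hc self_mem_Ici (mem_Ici.2 (le_of_lt hx)) hx
  · have hlim : Tendsto (simplicialDepth μ) atTop (𝓝 0) := by
      have h := ((tendsto_cdf_atTop μ).const_mul 2).mul ((tendsto_cdf_atTop μ).const_sub 1)
      rwa [sub_self, mul_zero] at h
    obtain ⟨b, hbz, hcb⟩ :=
      ((hlim.eventually (gt_mem_nhds hz.1)).and (eventually_ge_atTop c)).exists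
    obtain ⟨x, hx, hxz⟩ := intermediate_value_Ioo' hcb
      (continuous_simplicialDepth hcont).continuousOn ⟨hbz, hSc ▸ hz.2⟩
    exact ⟨x, hx.1, hxz⟩

lemma sqrt_one_sub_two_mul_simplicialDepth {x : ℝ} (hx : 1 / 2 ≤ cdf μ x) :
    Real.sqrt (1 - 2 * simplicialDepth μ x) = 2 * cdf μ x - 1 := by
  rw [← Real.sqrt_sq (by linarith : 0 ≤ 2 * cdf μ x - 1), simplicialDepth]
  congr 1
  ring

end SimplicialDepth

section SimplicialDepthOfDensity

variable {P Q : Measure ℝ} [IsProbabilityMeasure Q] {p q : ℝ → ℝ} {c : ℝ}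

lemma isSymmFold_simplicialDepth (hQ : Q = volume.withDensity fun x => ENNReal.ofReal (q x))
    (hq : Continuous q) (hqpos : ∀ x, 0 < q x) (hsymm : IsSymmAbout q c) :
    IsSymmFold (simplicialDepth Q) (fun x => 2 * q x * (1 - 2 * cdf Q x)) c := by
  have hσ : MeasurePreserving (fun x => 2 * c - x) Q Q :=
    hQ ▸ hsymm.measurePreserving_withDensity_ofReal
  have : NullSingletonClass Q := hQ ▸ inferInstance
  have hmono := strictMono_cdf hQ hq.aemeasurable hqpos
  have hc := cdf_center hσ
  have hcont := continuous_cdf hQ hq fun x => (hqpos x).le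
  refine ⟨(continuous_simplicialDepth hcont).measurable, isSymmAbout_simplicialDepth hσ,
    fun x _ => (hasDerivAt_simplicialDepth (hasDerivAt_cdf hQ hq (fun x => (hqpos x).le) x)
      ).hasDerivWithinAt, by fun_prop, fun x hx => ?_,
    (strictAntiOn_simplicialDepth hmono hc).injOn.mono Ioi_subset_Ici_self⟩
  have hFx : 1 / 2 < cdf Q x := hc ▸ hmono hx
  exact mul_ne_zero (mul_ne_zero two_ne_zero (hqpos x).ne') (by linarith)

theorem map_simplicialDepth_self (hQ : Q = volume.withDensity fun x => ENNReal.ofReal (q x))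
    (hq : Continuous q) (hqpos : ∀ x, 0 < q x) (hsymm : IsSymmAbout q c) :
    Q.map (simplicialDepth Q) = volume.withDensity fun z => ENNReal.ofReal
      (indicator (Icc (0 : ℝ) (1 / 2)) (fun z => 1 / Real.sqrt (1 - 2 * z)) z) := by
  have hσ : MeasurePreserving (fun x => 2 * c - x) Q Q :=
    hQ ▸ hsymm.measurePreserving_withDensity_ofReal
  have : NullSingletonClass Q := hQ ▸ inferInstance
  have hmono := strictMono_cdf hQ hq.aemeasurable hqpos
  have hc := cdf_center hσ
  have himage := simplicialDepth_image_Ioi hmono (continuous_cdf hQ hq fun x => (hqpos x).le) hc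
  have hfold := isSymmFold_simplicialDepth hQ hq hqpos hsymm
  rw [hfold.map_eq_withDensity_imageDensity hQ hsymm]
  refine withDensity_congr_ae ?_
  filter_upwards [volume.ae_ne 0, volume.ae_ne (1 / 2)] with z hz0 hz1
  by_cases hz : z ∈ Ioo (0 : ℝ) (1 / 2)
  · rw [indicator_of_mem (Ioo_subset_Icc_self hz)]
    rw [← himage] at hz
    obtain ⟨x, hx, rfl⟩ := hz
    have hFx : 1 / 2 < cdf Q x := hc ▸ hmono hx
    have habs : |2 * q x * (1 - 2 * cdf Q x)| = 2 * q x * (2 * cdf Q x - 1) := by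
      rw [abs_of_neg (by nlinarith [hqpos x])]
      ring
    rw [imageDensity_apply hfold.injOn hx, sqrt_one_sub_two_mul_simplicialDepth hFx.le, habs,
      Pi.mul_apply, Pi.ofNat_apply, div_mul_cancel_left₀ (mul_pos two_pos (hqpos x)).ne',
      one_div]
  · have hz' : z ∉ Icc (0 : ℝ) (1 / 2) := fun h =>
      hz ⟨lt_of_le_of_ne h.1 (Ne.symm hz0), lt_of_le_of_ne h.2 hz1⟩
    rw [indicator_of_notMem hz', imageDensity_of_notMem (himage ▸ hz)]

theorem TVD_map_simplicialDepth [IsFiniteMeasure P]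
    (hP : P = volume.withDensity fun x => ENNReal.ofReal (p x))
    (hQ : Q = volume.withDensity fun x => ENNReal.ofReal (q x))
    (hpm : Measurable p) (hp0 : ∀ x, 0 ≤ p x) (hpsymm : IsSymmAbout p c)
    (hq : Continuous q) (hqpos : ∀ x, 0 < q x) (hqsymm : IsSymmAbout q c) :
    TVD (P.map (simplicialDepth Q)) (volume.withDensity fun z => ENNReal.ofReal
      (indicator (Icc (0 : ℝ) (1 / 2)) (fun z => 1 / Real.sqrt (1 - 2 * z)) z)) = TVD P Q := by
  have hq0 : ∀ x, 0 ≤ q x := fun x => (hqpos x).le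
  rw [← map_simplicialDepth_self hQ hq hqpos hqsymm]
  exact (isSymmFold_simplicialDepth hQ hq hqpos hqsymm).TVD_map_eq hP hQ hpm hq.measurable hp0
    hq0 (integrable_of_eq_withDensity_ofReal hP hpm.aestronglyMeasurable hp0)
    (integrable_of_eq_withDensity_ofReal hQ hq.aestronglyMeasurable hq0) hpsymm hqsymm

end SimplicialDepthOfDensity

/-- Let `P, Q` have everywhere positive continuous densities `fX, fY` and CDFs `FX, FY`,
both symmetric around a common center `x*`. Then
`TVD(P_Q^{SD}, R) = TVD(Q_P^{SD}, R) = TVD(P, Q)`, where `Q_P^{SD}` is the law of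
`2 FY(X) (1 - FY(X))` for `X ~ P`, `P_Q^{SD}` is the law of `2 FX(Y) (1 - FX(Y))` for
`Y ~ Q`, and `R` is the distribution on `[0, 1/2]` with density `r(z) = 1 / √(1 - 2 z)`. -/
theorem sd_induced_tvd_eq_of_symmetric_concentric
    (P Q : Measure ℝ) [IsProbabilityMeasure P] [IsProbabilityMeasure Q]
    (fX fY : ℝ → ℝ) (hfXpos : ∀ x, 0 < fX x) (hfYpos : ∀ x, 0 < fY x)
    (hfXc : Continuous fX) (hfYc : Continuous fY)
    (hP : P = volume.withDensity (fun x => ENNReal.ofReal (fX x)))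
    (hQ : Q = volume.withDensity (fun x => ENNReal.ofReal (fY x)))
    (FX FY : ℝ → ℝ)
    (hFX : ∀ x, FX x = (P (Iic x)).toReal)
    (hFY : ∀ x, FY x = (Q (Iic x)).toReal)
    (xstar : ℝ)
    (hsymX : ∀ t : ℝ, fX (xstar + t) = fX (xstar - t))
    (hsymY : ∀ t : ℝ, fY (xstar + t) = fY (xstar - t)) :
    TVD (Measure.map (fun y => 2 * FX y * (1 - FX y)) Q)
        (volume.withDensity (fun z => ENNReal.ofReal
          (indicator (Icc (0 : ℝ) (1 / 2)) (fun z => 1 / Real.sqrt (1 - 2 * z)) z)))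
      = TVD P Q ∧
    TVD (Measure.map (fun x => 2 * FY x * (1 - FY x)) P)
        (volume.withDensity (fun z => ENNReal.ofReal
          (indicator (Icc (0 : ℝ) (1 / 2)) (fun z => 1 / Real.sqrt (1 - 2 * z)) z)))
      = TVD P Q := by
  obtain rfl : FX = cdf P := funext fun x => by rw [hFX, cdf_eq_real, measureReal_def]
  obtain rfl : FY = cdf Q := funext fun x => by rw [hFY, cdf_eq_real, measureReal_def]
  refine ⟨?_, TVD_map_simplicialDepth hP hQ hfXc.measurable (fun x => (hfXpos x).le) hsymX hfYc
    hfYpos hsymY⟩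
  rw [TVD_comm P Q]
  exact TVD_map_simplicialDepth hQ hP hfYc.measurable (fun x => (hfYpos x).le) hsymY hfXc hfXpos
    hsymX
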